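/- arXiv:1304.2005 — 5 statements merged into one kernel-verified Lean document; each statement's English description precedes it below -/
import Mathlib

section
/- The characteristic polynomial of the matrix A_n over the integers factors as char(A_n)(X) = ∏_{k=0}^{n} (X - (-1)^{n-k}(n-1)^k)^{binomial(n,k)·(n-1)^{n-k}}. Equivalently, the eigenvalues of A_n are (-1)^{n-k}(n-1)^k with multiplicity binomial(n,k)·(n-1)^{n-k}, for 0 ≤ k ≤ n. -/
open Polynomial Finset Matrix

namespace DTAux

section Big
variable {n : ℕ}

/-- n-fold Kronecker lift -/
def big (X : Matrix (Fin n) (Fin n) ℚ) : Matrix (Fin n → Fin n) (Fin n → Fin n) ℚ :=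
  Matrix.of fun f g => ∏ i, X (f i) (g i)

lemma big_mul (X Y : Matrix (Fin n) (Fin n) ℚ) : big X * big Y = big (X * Y) := by
  ext f g
  simp only [big, Matrix.mul_apply, Matrix.of_apply]
  rw [Finset.prod_univ_sum (fun _ => (univ : Finset (Fin n)))
    (fun i j => X (f i) j * Y j (g i)), Fintype.piFinset_univ]
  exact Finset.sum_congr rfl fun h _ => (Finset.prod_mul_distrib).symm

lemma big_one : big (1 : Matrix (Fin n) (Fin n) ℚ) = 1 := by
  ext f g
  simp only [big, Matrix.of_apply, Matrix.one_apply]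
  by_cases h : f = g
  · subst h; simp
  · rw [if_neg h]
    obtain ⟨i, hi⟩ := Function.ne_iff.mp h
    exact Finset.prod_eq_zero (Finset.mem_univ i) (by simp [Matrix.one_apply, hi])

lemma big_diagonal (d : Fin n → ℚ) :
    big (Matrix.diagonal d) = Matrix.diagonal fun f => ∏ i, d (f i) := by
  ext f g
  simp only [big, Matrix.of_apply, Matrix.diagonal_apply]
  by_cases h : f = g
  · subst h; simp
  · rw [if_neg h]
    obtain ⟨i, hi⟩ := Function.ne_iff.mp h
    exact Finset.prod_eq_zero (Finset.mem_univ i) (by simp [Matrix.diagonal_apply, hi])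

lemma charpoly_conj {m : Type*} [Fintype m] [DecidableEq m] (P Q B : Matrix m m ℚ)
    (h : P * Q = 1) : (P * B * Q).charpoly = B.charpoly := by
  have hC : P.map C * Q.map C = 1 := by
    rw [← Matrix.map_mul, h, Matrix.map_one _ (map_zero C) (map_one C)]
  have key : charmatrix (P * B * Q) = P.map C * charmatrix B * Q.map C := by
    unfold charmatrix
    rw [Matrix.mul_sub, Matrix.sub_mul]
    congr 1
    · rw [scalar_apply, ← Matrix.smul_one_eq_diagonal, mul_smul_comm, smul_mul_assoc, mul_one,
        hC]
    · simp only [RingHom.mapMatrix_apply, Matrix.map_mul]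
  rw [Matrix.charpoly, key, Matrix.det_mul, Matrix.det_mul, Matrix.charpoly]
  rw [mul_comm (P.map C).det _, mul_assoc, ← Matrix.det_mul, hC, Matrix.det_one, mul_one]

lemma charpoly_diagonal {m : Type*} [Fintype m] [DecidableEq m] (d : m → ℚ) :
    (Matrix.diagonal d).charpoly = ∏ i, (X - C (d i)) := by
  have : charmatrix (Matrix.diagonal d) = Matrix.diagonal fun i => X - C (d i) := by
    ext i j
    by_cases h : i = j
    · subst h; simp
    · simp [h, Matrix.diagonal_apply_ne _ h]
  rw [Matrix.charpoly, this, Matrix.det_diagonal]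

end Big

section Small
variable (n : ℕ) [NeZero n]

def Mq : Matrix (Fin n) (Fin n) ℚ := Matrix.of fun i j => if i = j then 0 else 1

def dvec : Fin n → ℚ := fun j => if j = 0 then (n : ℚ) - 1 else -1

def Pm : Matrix (Fin n) (Fin n) ℚ :=
  Matrix.of fun i j =>
    (if j = 0 then 1 else 0) + (if i = j then 1 else 0) - (if i = 0 then 1 else 0)

def Qm : Matrix (Fin n) (Fin n) ℚ :=
  Matrix.of fun i j => if i = 0 then (n : ℚ)⁻¹ else (if i = j then 1 else 0) - (n : ℚ)⁻¹

lemma colsum (j : Fin n) : ∑ k, Pm n k j = if j = 0 then (n : ℚ) else 0 := by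
  simp only [Pm, Matrix.of_apply]
  rw [Finset.sum_sub_distrib, Finset.sum_add_distrib]
  rw [Finset.sum_ite_eq' univ j (fun _ => (1:ℚ)), Finset.sum_ite_eq' univ (0 : Fin n) (fun _ => (1:ℚ))]
  simp only [Finset.mem_univ, if_true, Finset.sum_const, card_univ, Fintype.card_fin, nsmul_eq_mul]
  split <;> ring

lemma QP : Qm n * Pm n = 1 := by
  have hn : (n : ℚ) ≠ 0 := Nat.cast_ne_zero.mpr (NeZero.ne n)
  ext i j
  rw [Matrix.mul_apply, Matrix.one_apply]
  by_cases hi : i = 0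
  · subst hi
    simp only [Qm, Matrix.of_apply, eq_self_iff_true, if_true]
    rw [← Finset.mul_sum, colsum]
    by_cases hj : j = 0
    · subst hj; rw [if_pos rfl, if_pos rfl, inv_mul_cancel₀ hn]
    · rw [if_neg hj, if_neg (fun h => hj h.symm), mul_zero]
  · simp only [Qm, Matrix.of_apply, if_neg hi]
    have : ∀ k, ((if i = k then (1:ℚ) else 0) - (n:ℚ)⁻¹) * Pm n k j
        = (if i = k then Pm n k j else 0) - (n:ℚ)⁻¹ * Pm n k j := by
      intro k; split <;> ring
    rw [Finset.sum_congr rfl fun k _ => this k, Finset.sum_sub_distrib,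
      Finset.sum_ite_eq univ i (fun k => Pm n k j), ← Finset.mul_sum, colsum]
    simp only [Finset.mem_univ, if_true]
    by_cases hj : j = 0
    · subst hj
      rw [if_pos rfl, if_neg hi, mul_comm, mul_inv_cancel₀ hn]
      simp [Pm, hi]
    · rw [if_neg hj, mul_zero, sub_zero]
      by_cases h : i = j <;> simp [Pm, hj, hi, h]

lemma PQ : Pm n * Qm n = 1 := mul_eq_one_comm.mpr (QP n)

lemma MP : Mq n * Pm n = Pm n * Matrix.diagonal (dvec n) := by
  ext i j
  rw [Matrix.mul_apply, Matrix.mul_diagonal]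
  have : ∀ k, Mq n i k * Pm n k j = Pm n k j - (if i = k then Pm n k j else 0) := by
    intro k
    simp only [Mq, Matrix.of_apply]
    split <;> ring
  rw [Finset.sum_congr rfl fun k _ => this k, Finset.sum_sub_distrib,
    Finset.sum_ite_eq univ i (fun k => Pm n k j), colsum]
  simp only [Finset.mem_univ, if_true]
  by_cases hj : j = 0
  · subst hj
    have hP : Pm n i 0 = 1 := by
      simp only [Pm, Matrix.of_apply, eq_self_iff_true, if_true]
      split <;> ring
    rw [hP]
    simp [dvec]
  · rw [if_neg hj]
    simp [dvec, hj]

def fiber (f : Fin n → Fin n) : Finset (Fin n) := univ.filter fun i => f i = 0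

def cnt (f : Fin n → Fin n) : ℕ := (fiber n f).card

lemma cnt_le (f : Fin n → Fin n) : cnt n f ≤ n := by
  simpa [cnt] using Finset.card_le_univ (fiber n f)

lemma prod_dvec (f : Fin n → Fin n) :
    ∏ i, dvec n (f i) = (-1 : ℚ) ^ (n - cnt n f) * ((n : ℚ) - 1) ^ (cnt n f) := by
  have h := Finset.card_filter_add_card_filter_not
    (s := (univ : Finset (Fin n))) (p := fun i => f i = 0)
  rw [card_univ, Fintype.card_fin] at h
  simp only [dvec]
  rw [Finset.prod_ite, Finset.prod_const, Finset.prod_const]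
  rw [show (univ.filter fun i => ¬ f i = 0).card = n - cnt n f by
    unfold cnt fiber; omega]
  rw [show (univ.filter fun i => f i = 0).card = cnt n f from rfl]
  ring

lemma card_fiberset (S : Finset (Fin n)) :
    (univ.filter fun f : Fin n → Fin n => fiber n f = S).card = (n - 1) ^ (n - S.card) := by
  have key : (univ.filter fun f : Fin n → Fin n => fiber n f = S) =
      Fintype.piFinset fun i => if i ∈ S then ({0} : Finset (Fin n)) else univ.erase 0 := by
    ext f
    simp only [mem_filter, mem_univ, true_and, Fintype.mem_piFinset, fiber, Finset.ext_iff]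
    refine forall_congr' fun i => ?_
    by_cases h : i ∈ S <;> simp [h]
  rw [key, Fintype.card_piFinset]
  have h2 : ∀ i : Fin n, (if i ∈ S then ({0} : Finset (Fin n)) else univ.erase 0).card
      = if i ∈ S then 1 else n - 1 := by
    intro i
    split <;> simp [Finset.card_erase_of_mem, card_univ]
  rw [Finset.prod_congr rfl fun i _ => h2 i, Finset.prod_ite, Finset.prod_const_one,
    Finset.prod_const, one_mul]
  congr 1
  have h := Finset.card_filter_add_card_filter_not
    (s := (univ : Finset (Fin n))) (p := fun i => i ∈ S)
  rw [card_univ, Fintype.card_fin] at h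
  have : (univ.filter fun i => i ∈ S).card = S.card := by
    congr 1
    exact Finset.filter_univ_mem S
  omega

lemma card_cnt (k : ℕ) :
    (univ.filter fun f : Fin n → Fin n => cnt n f = k).card
      = n.choose k * (n - 1) ^ (n - k) := by
  rw [Finset.card_eq_sum_card_fiberwise (f := fiber n) (t := Finset.powersetCard k univ)
    (fun f hf => by
      rw [Finset.mem_coe, Finset.mem_powersetCard_univ]
      exact (Finset.mem_filter.mp (Finset.mem_coe.mp hf)).2)]
  have step : ∀ S ∈ Finset.powersetCard k (univ : Finset (Fin n)),
      ((univ.filter fun f : Fin n → Fin n => cnt n f = k).filter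
        fun f => fiber n f = S).card = (n - 1) ^ (n - k) := by
    intro S hS
    have hcard : S.card = k := Finset.mem_powersetCard_univ.mp hS
    rw [Finset.filter_filter]
    have h3 : (univ.filter fun f : Fin n → Fin n => cnt n f = k ∧ fiber n f = S)
        = univ.filter fun f : Fin n → Fin n => fiber n f = S := by
      ext f
      simp only [mem_filter, mem_univ, true_and, and_iff_right_iff_imp]
      intro h
      rw [cnt, h, hcard]
    rw [h3, card_fiberset, hcard]
  rw [Finset.sum_congr rfl step, Finset.sum_const, Finset.card_powersetCard, card_univ,
    Fintype.card_fin, smul_eq_mul]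

end Small
end DTAux

/-- The incidence matrix of disjoint transversals: rows and columns are indexed by
transversals `f : Fin n → Fin n`; the `(f, g)`-entry is `1` if `f` and `g` are
disjoint (i.e. `f i ≠ g i` for all `i`) and `0` otherwise. -/
def disjointTransversalMatrix (n : ℕ) :
    Matrix (Fin n → Fin n) (Fin n → Fin n) ℤ :=
  Matrix.of fun f g => if ∀ i : Fin n, f i ≠ g i then 1 else 0

open DTAux

theorem charpoly_disjointTransversalMatrix (n : ℕ) (hn : 0 < n) :
    (disjointTransversalMatrix n).charpoly =
      ∏ k ∈ Finset.range (n + 1),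
        (X - C ((-1 : ℤ) ^ (n - k) * ((n : ℤ) - 1) ^ k)) ^
          (n.choose k * (n - 1) ^ (n - k)) := by
  haveI : NeZero n := ⟨hn.ne'⟩
  apply Polynomial.map_injective (Int.castRingHom ℚ) Int.cast_injective
  rw [← Matrix.charpoly_map]
  have hA : (disjointTransversalMatrix n).map (Int.castRingHom ℚ) = big (Mq n) := by
    ext f g
    simp only [disjointTransversalMatrix, Matrix.map_apply, Matrix.of_apply, big, Mq]
    by_cases h : ∀ i : Fin n, f i ≠ g i
    · rw [if_pos h, Finset.prod_congr rfl fun i _ => if_neg fun he => h i he]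
      simp
    · rw [if_neg h]
      push_neg at h
      obtain ⟨i, hi⟩ := h
      rw [map_zero]
      exact (Finset.prod_eq_zero (Finset.mem_univ i)
        (show (if f i = g i then (0:ℚ) else 1) = 0 from if_pos hi)).symm
  have hPQ : big (Pm n) * big (Qm n) = 1 := by rw [big_mul, PQ, big_one]
  have hsim : big (Mq n) =
      big (Pm n) * Matrix.diagonal (fun f : Fin n → Fin n => ∏ i, dvec n (f i)) * big (Qm n) := by
    have h1 : big (Mq n) * big (Pm n)
        = big (Pm n) * Matrix.diagonal (fun f : Fin n → Fin n => ∏ i, dvec n (f i)) := by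
      rw [big_mul, MP, ← big_mul, big_diagonal]
    calc big (Mq n) = big (Mq n) * (big (Pm n) * big (Qm n)) := by rw [hPQ, mul_one]
      _ = big (Mq n) * big (Pm n) * big (Qm n) := by rw [mul_assoc]
      _ = _ := by rw [h1]
  rw [hA, hsim, charpoly_conj _ _ _ hPQ, DTAux.charpoly_diagonal]
  rw [Polynomial.map_prod]
  have hmaps : ∀ f : Fin n → Fin n, f ∈ (univ : Finset (Fin n → Fin n)) →
      cnt n f ∈ Finset.range (n + 1) := fun f _ =>
    Finset.mem_range.mpr (Nat.lt_succ_of_le (cnt_le n f))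
  rw [← Finset.prod_fiberwise_of_maps_to hmaps fun f => X - C (∏ i, dvec n (f i))]
  refine Finset.prod_congr rfl fun k hk => ?_
  have inner : ∀ f ∈ (univ : Finset (Fin n → Fin n)).filter fun f => cnt n f = k,
      X - C (∏ i, dvec n (f i))
        = X - C ((-1 : ℚ) ^ (n - k) * ((n : ℚ) - 1) ^ k) := by
    intro f hf
    rw [prod_dvec, (Finset.mem_filter.mp hf).2]
  rw [Finset.prod_congr rfl inner, Finset.prod_const, card_cnt]
  rw [Polynomial.map_pow, Polynomial.map_sub, Polynomial.map_X, Polynomial.map_C]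
  have hcast : ((Int.castRingHom ℚ) ((-1 : ℤ) ^ (n - k) * ((n : ℤ) - 1) ^ k))
      = (-1 : ℚ) ^ (n - k) * ((n : ℚ) - 1) ^ k := by
    simp only [_root_.map_mul, map_pow, map_neg, _root_.map_one, map_sub, map_natCast]
  rw [hcast]
end

section
/- There exist unimodular integer matrices P and Q (square integer matrices of size n^n whose determinants are units in ℤ) and a diagonal integer matrix D = diag(d_1, …, d_{n^n}) with P · A_n · Q = D, such that d_i divides d_{i+1} for all 1 ≤ i < n^n, and for each 0 ≤ k ≤ n the value (n-1)^k occurs among the diagonal entries d_1, …, d_{n^n} exactly binomial(n,k)·(n-1)^{n-k} times. In other words, the invariant factors of A_n (entries of its Smith normal form) are (n-1)^k with multiplicity binomial(n,k)·(n-1)^{n-k}, for 0 ≤ k ≤ n. -/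
/-- The incidence matrix of disjoint transversals, reindexed by `Fin (n ^ n)`
via the standard equivalence `(Fin n → Fin n) ≃ Fin (n ^ n)`. -/
def disjointTransversalMatrix' (n : ℕ) : Matrix (Fin (n ^ n)) (Fin (n ^ n)) ℤ :=
  (disjointTransversalMatrix n).reindex finFunctionFinEquiv finFunctionFinEquiv

namespace DTSNF
open Matrix Finset


def pM (m : ℕ) : Matrix (Fin (m+2)) (Fin (m+2)) ℤ :=
  Matrix.of fun i j => if i = 0 then 1 else if i = j then -1 else 0

def qM (m : ℕ) : Matrix (Fin (m+2)) (Fin (m+2)) ℤ :=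
  Matrix.of fun i j =>
    if i = 0 then (if j = 0 then -(m : ℤ) else -1)
    else if j = 0 then 1 else if i = j then 1 else 0

def qN (m : ℕ) : Matrix (Fin (m+2)) (Fin (m+2)) ℤ :=
  Matrix.of fun i j => if i = 0 then 1 else (if i = j then 1 else 0) - 1

def BM (m : ℕ) : Matrix (Fin (m+2)) (Fin (m+2)) ℤ :=
  Matrix.of fun i j => if i ≠ j then 1 else 0

def dv (m : ℕ) : Fin (m+2) → ℤ := fun i => if i = 0 then (m : ℤ) + 1 else 1

lemma sum_qM_col (m : ℕ) (j : Fin (m+2)) :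
    ∑ k, qM m k j = if j = 0 then 1 else 0 := by
  rw [Fin.sum_univ_succ]
  induction j using Fin.cases with
  | zero => simp [qM, Fin.succ_ne_zero]
  | succ j => simp [qM, Fin.succ_ne_zero, (Fin.succ_ne_zero j).symm, Fin.succ_inj]

lemma pM_mul_BM (m : ℕ) : pM m * BM m =
    Matrix.of fun i k => if i = 0 then (m : ℤ) + 1 else (if i = k then 1 else 0) - 1 := by
  ext i k
  rw [Matrix.mul_apply]
  simp only [pM, Matrix.of_apply]
  induction i using Fin.cases with
  | zero =>
    have h : ∀ l : Fin (m+2), (if l ≠ k then (1:ℤ) else 0) = 1 - if l = k then 1 else 0 := by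
      intro l; by_cases h : l = k <;> simp [h]
    simp only [if_pos rfl, one_mul, BM, Matrix.of_apply, h, Finset.sum_sub_distrib,
      Finset.sum_const, Finset.sum_ite_eq', Finset.mem_univ, if_true]
    simp only [Finset.card_univ, Fintype.card_fin]
    ring

  | succ i =>
    have h : ∀ l : Fin (m+2),
        (if i.succ = 0 then (1:ℤ) else if i.succ = l then -1 else 0) * BM m l k
        = if i.succ = l then -(BM m l k) else 0 := by
      intro l
      simp [Fin.succ_ne_zero, ite_mul]
    rw [Finset.sum_congr rfl fun l _ => h l, Finset.sum_ite_eq]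
    by_cases hk : i.succ = k
    · subst hk; simp [BM, Fin.succ_ne_zero]
    · simp [BM, hk, Fin.succ_ne_zero]

theorem pM_mul_BM_mul_qM (m : ℕ) : pM m * BM m * qM m = Matrix.diagonal (dv m) := by
  rw [pM_mul_BM]
  ext i j
  rw [Matrix.mul_apply]
  simp only [Matrix.of_apply]
  induction i using Fin.cases with
  | zero =>
    simp only [eq_self_iff_true, if_true]
    rw [← Finset.mul_sum, sum_qM_col]
    induction j using Fin.cases with
    | zero => simp [dv]
    | succ j => simp [(Fin.succ_ne_zero j).symm, Fin.succ_ne_zero]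
  | succ i =>
    have h : ∀ k : Fin (m+2),
        ((if i.succ = 0 then ((m:ℤ)+1) else (if i.succ = k then 1 else 0) - 1)) * qM m k j
        = (if i.succ = k then qM m k j else 0) - qM m k j := by
      intro k
      by_cases h : i.succ = k
      · subst h; simp [Fin.succ_ne_zero]
      · simp [h, Fin.succ_ne_zero, sub_mul]
    rw [Finset.sum_congr rfl fun k _ => h k, Finset.sum_sub_distrib, Finset.sum_ite_eq,
      sum_qM_col]
    induction j using Fin.cases with
    | zero => simp [qM, Fin.succ_ne_zero, dv]
    | succ j =>
      simp [qM, Fin.succ_ne_zero, (Fin.succ_ne_zero j).symm, Fin.succ_inj,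
        Matrix.diagonal_apply, dv]



/-! ### tensor powers -/

def tpow {n : ℕ} (a : Matrix (Fin n) (Fin n) ℤ) :
    Matrix (Fin n → Fin n) (Fin n → Fin n) ℤ :=
  Matrix.of fun f g => ∏ i, a (f i) (g i)

lemma tpow_mul {n : ℕ} (a b : Matrix (Fin n) (Fin n) ℤ) :
    tpow a * tpow b = tpow (a * b) := by
  ext f g
  rw [Matrix.mul_apply]
  simp only [tpow, Matrix.of_apply, Matrix.mul_apply, ← Finset.prod_mul_distrib]
  rw [Finset.prod_univ_sum, Fintype.piFinset_univ]

lemma tpow_one {n : ℕ} : tpow (1 : Matrix (Fin n) (Fin n) ℤ) = 1 := by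
  ext f g
  simp only [tpow, Matrix.of_apply]
  by_cases h : f = g
  · subst h
    simp [Matrix.one_apply]
  · obtain ⟨i, hi⟩ := Function.ne_iff.mp h
    rw [Matrix.one_apply, if_neg h]
    exact Finset.prod_eq_zero (Finset.mem_univ i) (by simp [Matrix.one_apply, hi])

lemma tpow_diagonal {n : ℕ} (v : Fin n → ℤ) :
    tpow (Matrix.diagonal v) = Matrix.diagonal (fun f => ∏ i, v (f i)) := by
  ext f g
  simp only [tpow, Matrix.of_apply, Matrix.diagonal_apply]
  by_cases h : f = g
  · subst h
    simp [Matrix.diagonal_apply]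
  · rw [if_neg h]
    obtain ⟨i, hi⟩ := Function.ne_iff.mp h
    exact Finset.prod_eq_zero (Finset.mem_univ i) (by simp [Matrix.diagonal_apply, hi])



def permL {N : ℕ} (σ : Equiv.Perm (Fin N)) : Matrix (Fin N) (Fin N) ℤ :=
  Matrix.of fun i j => if σ i = j then 1 else 0

def permR {N : ℕ} (σ : Equiv.Perm (Fin N)) : Matrix (Fin N) (Fin N) ℤ :=
  Matrix.of fun i j => if i = σ j then 1 else 0

lemma permL_mul {N : ℕ} (σ : Equiv.Perm (Fin N)) (M : Matrix (Fin N) (Fin N) ℤ) :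
    permL σ * M = M.submatrix σ id := by
  ext i j
  rw [Matrix.mul_apply]
  simp only [permL, Matrix.of_apply, ite_mul, one_mul, zero_mul, Finset.sum_ite_eq,
    Finset.mem_univ, if_true, Matrix.submatrix_apply, id]

lemma mul_permR {N : ℕ} (σ : Equiv.Perm (Fin N)) (M : Matrix (Fin N) (Fin N) ℤ) :
    M * permR σ = M.submatrix id σ := by
  ext i j
  rw [Matrix.mul_apply]
  simp only [permR, Matrix.of_apply, mul_ite, mul_one, mul_zero, Finset.sum_ite_eq',
    Finset.mem_univ, if_true, Matrix.submatrix_apply, id]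

lemma permL_mul_permR {N : ℕ} (σ : Equiv.Perm (Fin N)) : permL σ * permR σ = 1 := by
  rw [permL_mul]
  ext i j
  simp [permR, Matrix.one_apply, Matrix.submatrix_apply]

lemma diagonal_submatrix {A B : Type*} [DecidableEq A] [DecidableEq B] (e : A ≃ B) (v : B → ℤ) :
    (Matrix.diagonal v).submatrix e e = Matrix.diagonal (fun a => v (e a)) := by
  ext i j
  simp only [Matrix.diagonal_apply, Matrix.submatrix_apply, EmbeddingLike.apply_eq_iff_eq]

/-! ### counting -/

lemma card_fiber_eq {ι β : Type*} [Fintype ι] [DecidableEq ι] [Fintype β] [DecidableEq β]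
    (a : β) (k : ℕ) :
    (Finset.univ.filter fun f : ι → β =>
      (Finset.univ.filter fun i => f i = a).card = k).card
    = (Fintype.card ι).choose k * (Fintype.card β - 1) ^ (Fintype.card ι - k) := by
  classical
  rw [Finset.card_eq_sum_card_fiberwise
    (f := fun f : ι → β => Finset.univ.filter fun i => f i = a)
    (t := Finset.powersetCard k Finset.univ)
    (fun f hf => Finset.mem_powersetCard_univ.mpr (Finset.mem_filter.mp hf).2)]
  rw [Finset.sum_congr rfl (fun s hs => ?_), Finset.sum_const, Finset.card_powersetCard,
    Finset.card_univ, smul_eq_mul]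
  rw [Finset.mem_powersetCard_univ] at hs
  have hset : (Finset.univ.filter fun f : ι → β =>
        (Finset.univ.filter fun i => f i = a).card = k).filter
        (fun f => Finset.univ.filter (fun i => f i = a) = s)
      = Fintype.piFinset fun i => if i ∈ s then ({a} : Finset β) else Finset.univ.erase a := by
    ext f
    simp only [Finset.mem_filter, Finset.mem_univ, true_and, Fintype.mem_piFinset]
    constructor
    · rintro ⟨hk, hfil⟩ i
      have hiff : i ∈ s ↔ f i = a := by rw [← hfil]; simp
      by_cases hi : i ∈ s
      · simp [hi, hiff.mp hi]
      · rw [if_neg hi, Finset.mem_erase]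
        exact ⟨fun h => hi (hiff.mpr h), Finset.mem_univ _⟩
    · intro h
      have hiff : ∀ i, f i = a ↔ i ∈ s := by
        intro i
        by_cases hi : i ∈ s
        · have := h i
          rw [if_pos hi] at this
          simp only [Finset.mem_singleton] at this
          simp [hi, this]
        · have := h i
          rw [if_neg hi] at this
          simp only [Finset.mem_erase] at this
          simp [hi, this.1]
      have hfe : Finset.univ.filter (fun i => f i = a) = s := by
        ext i; simp [hiff i]
      exact ⟨by rw [hfe, hs], hfe⟩
  rw [hset, Fintype.card_piFinset]
  have hcard : ∀ i : ι, ((if i ∈ s then ({a} : Finset β) else Finset.univ.erase a)).card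
      = if i ∈ s then 1 else Fintype.card β - 1 := by
    intro i
    by_cases hi : i ∈ s <;> simp [hi, Finset.card_erase_of_mem, Finset.card_univ]
  rw [Finset.prod_congr rfl (fun i _ => hcard i), Finset.prod_ite, Finset.prod_const,
    Finset.prod_const, one_pow, one_mul]
  congr 1
  have : Finset.univ.filter (fun i => i ∉ s) = sᶜ := by
    ext i; simp
  rw [this, Finset.card_compl, hs]

/-! ### multiset fiberwise -/

lemma sum_singleton_map {α β : Type*} (g : α → β) (M : Multiset α) :
    (M.map fun x => ({g x} : Multiset β)).sum = M.map g := by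
  induction M using Multiset.induction with
  | empty => simp
  | cons a s ih => simp [ih]

lemma map_eq_sum_singleton {α β : Type*} (g : α → β) (u : Finset α) :
    u.val.map g = ∑ x ∈ u, ({g x} : Multiset β) := by
  rw [Finset.sum, sum_singleton_map]

lemma multiset_map_eq_sum_fiber {α β ι : Type*} [DecidableEq ι] (s : Finset α) (g : α → β)
    (c : α → ι) (t : Finset ι) (h : ∀ x ∈ s, c x ∈ t) :
    s.val.map g = ∑ k ∈ t, (s.filter fun x => c x = k).val.map g := by
  rw [map_eq_sum_singleton g s, ← Finset.sum_fiberwise_of_maps_to h fun x => ({g x} : Multiset β)]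
  exact Finset.sum_congr rfl fun k _ => (map_eq_sum_singleton g _).symm


theorem pM_mul_pM (m : ℕ) : pM m * pM m = 1 := by
  ext i j
  rw [Matrix.mul_apply]
  induction i using Fin.cases with
  | zero =>
    induction j using Fin.cases with
    | zero => simp [pM, Fin.sum_univ_succ, Matrix.one_apply, Fin.succ_ne_zero]
    | succ j => simp [pM, Fin.sum_univ_succ, Matrix.one_apply, Fin.succ_ne_zero, Fin.succ_inj,
        (Fin.succ_ne_zero j).symm]
  | succ i =>
    induction j using Fin.cases with
    | zero => simp [pM, Fin.sum_univ_succ, Matrix.one_apply, Fin.succ_ne_zero, Fin.succ_inj]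
    | succ j => simp [pM, Fin.sum_univ_succ, Matrix.one_apply, Fin.succ_ne_zero, Fin.succ_inj,
        apply_ite Neg.neg]


theorem qM_mul_qN (m : ℕ) : qM m * qN m = 1 := by
  ext i j
  rw [Matrix.mul_apply]
  induction i using Fin.cases with
  | zero =>
    induction j using Fin.cases with
    | zero => simp [qM, qN, Fin.sum_univ_succ, Matrix.one_apply, Fin.succ_ne_zero]
    | succ j => simp [qM, qN, Fin.sum_univ_succ, Matrix.one_apply, Fin.succ_ne_zero, Fin.succ_inj,
        (Fin.succ_ne_zero j).symm]
  | succ i =>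
    induction j using Fin.cases with
    | zero => simp [qM, qN, Fin.sum_univ_succ, Matrix.one_apply, Fin.succ_ne_zero, Fin.succ_inj]
    | succ j => simp [qM, qN, Fin.sum_univ_succ, Matrix.one_apply, Fin.succ_ne_zero, Fin.succ_inj,
        (Fin.succ_ne_zero j).symm, mul_sub, Finset.sum_sub_distrib]

lemma tpow_BM (m : ℕ) : tpow (BM m) = disjointTransversalMatrix (m+2) := by
  ext f g
  simp only [tpow, BM, Matrix.of_apply, disjointTransversalMatrix]
  by_cases h : ∀ i, f i ≠ g i
  · rw [if_pos h, Finset.prod_congr rfl fun i _ => if_pos (h i)]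
    simp
  · rw [if_neg h]
    push_neg at h
    obtain ⟨i, hi⟩ := h
    exact Finset.prod_eq_zero (Finset.mem_univ i) (by simp [hi])

lemma prod_dv (m : ℕ) (f : Fin (m+2) → Fin (m+2)) :
    ∏ i, dv m (f i) = ((m:ℤ)+1) ^ (Finset.univ.filter fun i => f i = 0).card := by
  simp only [dv]
  rw [Finset.prod_ite, Finset.prod_const, Finset.prod_const, one_pow, mul_one]

end DTSNF

open DTSNF Matrix Finset in
/-- The Smith normal form of `A_n`. -/
theorem smithNormalForm_disjointTransversalMatrix (n : ℕ) (hn : 2 ≤ n) :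
    ∃ (P Q : Matrix (Fin (n ^ n)) (Fin (n ^ n)) ℤ) (d : Fin (n ^ n) → ℤ),
      IsUnit P.det ∧ IsUnit Q.det ∧
      P * disjointTransversalMatrix' n * Q = Matrix.diagonal d ∧
      (∀ i j : Fin (n ^ n), i ≤ j → d i ∣ d j) ∧
      (Finset.univ.val.map d =
        ∑ k ∈ Finset.range (n + 1),
          Multiset.replicate (n.choose k * (n - 1) ^ (n - k)) (((n : ℤ) - 1) ^ k)) := by
  obtain ⟨m, rfl⟩ : ∃ m, n = m + 2 := ⟨n - 2, by omega⟩
  classical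
  set e : (Fin (m+2) → Fin (m+2)) ≃ Fin ((m+2) ^ (m+2)) := finFunctionFinEquiv with he
  set D0 : (Fin (m+2) → Fin (m+2)) → ℤ := fun f => ∏ i, dv m (f i) with hD0
  set d' : Fin ((m+2) ^ (m+2)) → ℤ := fun i => D0 (e.symm i) with hd'
  set σ : Equiv.Perm (Fin ((m+2) ^ (m+2))) := Tuple.sort d' with hσ
  refine ⟨permL σ * (tpow (pM m)).submatrix e.symm e.symm,
          (tpow (qM m)).submatrix e.symm e.symm * permR σ,
          d' ∘ σ, ?_, ?_, ?_, ?_, ?_⟩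
  · rw [Matrix.det_mul]
    refine (Matrix.isUnit_det_of_right_inverse (permL_mul_permR σ)).mul ?_
    refine Matrix.isUnit_det_of_right_inverse
      (B := (tpow (pM m)).submatrix e.symm e.symm) ?_
    rw [Matrix.submatrix_mul_equiv _ _ _ e.symm _, tpow_mul, pM_mul_pM, tpow_one,
      Matrix.submatrix_one_equiv]
  · rw [Matrix.det_mul]
    refine IsUnit.mul ?_ (Matrix.isUnit_det_of_left_inverse (permL_mul_permR σ))
    refine Matrix.isUnit_det_of_right_inverse
      (B := (tpow (qN m)).submatrix e.symm e.symm) ?_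
    rw [Matrix.submatrix_mul_equiv _ _ _ e.symm _, tpow_mul, qM_mul_qN, tpow_one,
      Matrix.submatrix_one_equiv]
  · have hA : disjointTransversalMatrix' (m+2)
        = (tpow (BM m)).submatrix e.symm e.symm := by
      rw [disjointTransversalMatrix', Matrix.reindex_apply, tpow_BM]
    rw [hA]
    have key : (tpow (pM m)).submatrix ⇑e.symm ⇑e.symm *
          (tpow (BM m)).submatrix ⇑e.symm ⇑e.symm *
          (tpow (qM m)).submatrix ⇑e.symm ⇑e.symm
        = Matrix.diagonal d' := by
      rw [Matrix.submatrix_mul_equiv _ _ _ e.symm _, Matrix.submatrix_mul_equiv _ _ _ e.symm _,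
        tpow_mul, tpow_mul, pM_mul_BM_mul_qM, tpow_diagonal]
      exact diagonal_submatrix e.symm (fun f => ∏ i, dv m (f i))
    calc permL σ * (tpow (pM m)).submatrix ⇑e.symm ⇑e.symm *
          (tpow (BM m)).submatrix ⇑e.symm ⇑e.symm *
          ((tpow (qM m)).submatrix ⇑e.symm ⇑e.symm * permR σ)
        = permL σ * ((tpow (pM m)).submatrix ⇑e.symm ⇑e.symm *
            (tpow (BM m)).submatrix ⇑e.symm ⇑e.symm *
            (tpow (qM m)).submatrix ⇑e.symm ⇑e.symm) * permR σ := by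
          simp only [Matrix.mul_assoc]
      _ = permL σ * Matrix.diagonal d' * permR σ := by rw [key]
      _ = Matrix.diagonal (d' ∘ σ) := by
          rw [permL_mul, mul_permR, Matrix.submatrix_submatrix]
          exact diagonal_submatrix σ d'
  · intro i j hij
    have h1 : (d' ∘ σ) i ≤ (d' ∘ σ) j := Tuple.monotone_sort d' hij
    simp only [Function.comp_apply] at h1 ⊢
    rw [hd'] at h1 ⊢
    simp only [hD0, prod_dv] at h1 ⊢
    rcases Nat.eq_zero_or_pos m with hm | hm
    · subst hm; simp
    · have hbase : (1:ℤ) < (m:ℤ)+1 := by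
        have : (1:ℤ) ≤ (m:ℤ) := by exact_mod_cast hm
        omega
      exact pow_dvd_pow _ ((pow_le_pow_iff_right₀ hbase).mp h1)
  · have hperm : Finset.univ.val.map ⇑σ = Finset.univ.val := by
      conv_rhs => rw [← Finset.map_univ_equiv σ]
      rw [Finset.map_val, Equiv.coe_toEmbedding]
    have hesymm : Finset.univ.val.map ⇑e.symm = Finset.univ.val := by
      conv_rhs => rw [← Finset.map_univ_equiv e.symm]
      rw [Finset.map_val, Equiv.coe_toEmbedding]
    have h1 : Finset.univ.val.map (d' ∘ ⇑σ) = Finset.univ.val.map D0 := by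
      rw [← Multiset.map_map d' ⇑σ, hperm, hd']
      rw [show (fun i => D0 (e.symm i)) = D0 ∘ ⇑e.symm from rfl,
        ← Multiset.map_map D0 ⇑e.symm, hesymm]
    rw [h1]
    rw [multiset_map_eq_sum_fiber Finset.univ D0
      (fun f => (Finset.univ.filter fun i => f i = 0).card) (Finset.range (m+2+1))
      (fun f _ => Finset.mem_range.mpr (Nat.lt_succ_of_le
        (le_trans (Finset.card_filter_le _ _) (by simp))))]
    refine Finset.sum_congr rfl fun k hk => ?_
    have hmapped : (Finset.univ.filter fun f : Fin (m+2) → Fin (m+2) =>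
          (Finset.univ.filter fun i => f i = 0).card = k).val.map D0
        = (Finset.univ.filter fun f : Fin (m+2) → Fin (m+2) =>
          (Finset.univ.filter fun i => f i = 0).card = k).val.map
            (Function.const _ (((m:ℤ)+1) ^ k)) := by
      refine Multiset.map_congr rfl fun f hf => ?_
      have hf' := Finset.mem_filter.mp (Finset.mem_def.mpr hf)
      rw [hD0]
      simp only
      rw [prod_dv, hf'.2]
      rfl
    rw [hmapped, Multiset.map_const]
    have hval : (((m+2 : ℕ) : ℤ) - 1) ^ k = (((m:ℤ)+1)) ^ k := by push_cast; ring
    have hcard : Multiset.card (Finset.univ.filter fun f : Fin (m+2) → Fin (m+2) =>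
          (Finset.univ.filter fun i => f i = 0).card = k).val
        = (m+2).choose k * (m+2-1) ^ (m+2-k) := by
      rw [← Finset.card_def, card_fiber_eq (0 : Fin (m+2)) k]
      simp [Fintype.card_fin]
    rw [hcard, hval]
end

section
/- The cokernel of A_n acting as a ℤ-linear map on the free abelian group ℤ^{(Fin n → Fin n)}, i.e., the quotient ℤ^{(Fin n → Fin n)} / Image(A_n), is isomorphic as an abelian group to the direct sum over 0 ≤ k ≤ n of binomial(n,k)·(n-1)^{n-k} copies of ℤ/((n-1)^k)ℤ. -/
open Finset

namespace DTA

variable (n : ℕ)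

def bM : Matrix (Fin n) (Fin n) ℤ := Matrix.of fun i j => if i ≠ j then 1 else 0
def uM : Matrix (Fin n) (Fin n) ℤ := Matrix.of fun i j =>
  if (i : ℕ) = 0 then (if (j : ℕ) = 0 then 2 - (n : ℤ) else 1)
  else if (j : ℕ) = 0 then -1 else if j = i then 1 else 0
def uInvM : Matrix (Fin n) (Fin n) ℤ := Matrix.of fun i j =>
  if (j : ℕ) = 0 then 1 else if i = j then 0 else -1
def vM : Matrix (Fin n) (Fin n) ℤ := Matrix.of fun i j =>
  if (j : ℕ) = 0 then 1 else if i = j then -1 else 0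
def dv : Fin n → ℤ := fun j => if (j : ℕ) = 0 then (n : ℤ) - 1 else 1

variable {n}

lemma val_eq_zero_iff (hn : 0 < n) (k : Fin n) : (k : ℕ) = 0 ↔ k = ⟨0, hn⟩ := by
  constructor
  · intro h; exact Fin.ext h
  · intro h; subst h; rfl

lemma L1 (t : Fin n) (a c : ℤ) :
    ∑ k : Fin n, (if k = t then a else c) = a + ((n : ℤ) - 1) * c := by
  have h : ∀ k : Fin n, (if k = t then a else c) = (if k = t then a - c else 0) + c := by
    intro k; split_ifs <;> ring
  rw [Finset.sum_congr rfl fun k _ => h k, Finset.sum_add_distrib,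
    Finset.sum_ite_eq' univ t fun _ => a - c, Finset.sum_const]
  simp [Finset.card_univ]
  ring

lemma L2 {t s : Fin n} (hts : t ≠ s) (a b c : ℤ) :
    ∑ k : Fin n, (if k = t then a else if k = s then b else c)
      = a + b + ((n : ℤ) - 2) * c := by
  have h : ∀ k : Fin n, (if k = t then a else if k = s then b else c)
      = (if k = t then a - c else 0) + ((if k = s then b - c else 0) + c) := by
    intro k
    by_cases h1 : k = t
    · subst h1; simp [hts]
    · by_cases h2 : k = s
      · subst h2; simp [h1]
      · simp [h1, h2]
  rw [Finset.sum_congr rfl fun k _ => h k, Finset.sum_add_distrib,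
    Finset.sum_ite_eq' univ t fun _ => a - c, Finset.sum_add_distrib,
    Finset.sum_ite_eq' univ s fun _ => b - c, Finset.sum_const]
  simp [Finset.card_univ]
  push_cast
  ring


lemma ub : uM n * bM n = Matrix.of (fun i j : Fin n =>
    if (i : ℕ) = 0 then (if (j : ℕ) = 0 then (n : ℤ) - 1 else 0)
    else (if (j : ℕ) = 0 then 1 else 0) - (if j = i then 1 else 0)) := by
  ext i j
  have hn : 0 < n := i.pos
  rw [Matrix.mul_apply]
  simp only [uM, bM, Matrix.of_apply, val_eq_zero_iff hn, ne_eq]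
  by_cases hi : i = (⟨0, hn⟩ : Fin n)
  · by_cases hj : j = (⟨0, hn⟩ : Fin n)
    · have hp : ∀ k : Fin n, (if i = (⟨0, hn⟩ : Fin n) then (if k = (⟨0, hn⟩ : Fin n) then 2 - (n:ℤ) else 1) else if k = (⟨0, hn⟩ : Fin n) then -1 else if k = i then 1 else 0) * (if ¬ k = j then 1 else 0)
          = if k = (⟨0, hn⟩ : Fin n) then 0 else 1 := by
        intro k; by_cases h : k = (⟨0, hn⟩ : Fin n) <;> simp [h, hi, hj]
      rw [Finset.sum_congr rfl fun k _ => hp k, L1]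
      simp [hi, hj]
    · have hp : ∀ k : Fin n, (if i = (⟨0, hn⟩ : Fin n) then (if k = (⟨0, hn⟩ : Fin n) then 2 - (n:ℤ) else 1) else if k = (⟨0, hn⟩ : Fin n) then -1 else if k = i then 1 else 0) * (if ¬ k = j then 1 else 0)
          = if k = (⟨0, hn⟩ : Fin n) then 2 - (n:ℤ) else if k = j then 0 else 1 := by
        intro k
        by_cases h : k = (⟨0, hn⟩ : Fin n)
        · simp [h, hi, Ne.symm hj]
        · by_cases h2 : k = j <;> simp [h, h2, hi, hj]
      rw [Finset.sum_congr rfl fun k _ => hp k, L2 (fun h => hj h.symm)]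
      simp [hi, hj]
  · by_cases hj : j = (⟨0, hn⟩ : Fin n)
    · have hp : ∀ k : Fin n, (if i = (⟨0, hn⟩ : Fin n) then (if k = (⟨0, hn⟩ : Fin n) then 2 - (n:ℤ) else 1) else if k = (⟨0, hn⟩ : Fin n) then -1 else if k = i then 1 else 0) * (if ¬ k = j then 1 else 0)
          = if k = (⟨0, hn⟩ : Fin n) then 0 else if k = i then 1 else 0 := by
        intro k
        by_cases h : k = (⟨0, hn⟩ : Fin n)
        · simp [h, hi, hj]
        · by_cases h2 : k = i <;> simp [h, h2, hi, hj, fun hh : k = j => h (hh.trans hj)]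
      rw [Finset.sum_congr rfl fun k _ => hp k, L2 (Ne.symm hi)]
      simp [hi, hj, Ne.symm hi]
    · have hp : ∀ k : Fin n, (if i = (⟨0, hn⟩ : Fin n) then (if k = (⟨0, hn⟩ : Fin n) then 2 - (n:ℤ) else 1) else if k = (⟨0, hn⟩ : Fin n) then -1 else if k = i then 1 else 0) * (if ¬ k = j then 1 else 0)
          = if k = (⟨0, hn⟩ : Fin n) then -1 else if k = i then (if i = j then 0 else 1) else 0 := by
        intro k
        by_cases h : k = (⟨0, hn⟩ : Fin n)
        · simp [h, hi, Ne.symm hj]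
        · by_cases h2 : k = i
          · subst h2; by_cases h3 : k = j <;> simp [h, h3, hi, hj]
          · simp [h, h2, hi]
      rw [Finset.sum_congr rfl fun k _ => hp k, L2 (Ne.symm hi)]
      by_cases h4 : i = j
      · simp [hi, hj, h4]
      · simp [hi, hj, h4, (Ne.symm h4 : j ≠ i)]

lemma ubv : uM n * bM n * vM n = Matrix.diagonal (dv n) := by
  rw [ub]
  ext i j
  have hn : 0 < n := i.pos
  rw [Matrix.mul_apply]
  simp only [vM, dv, Matrix.of_apply, Matrix.diagonal_apply, val_eq_zero_iff hn]
  by_cases hi : i = (⟨0, hn⟩ : Fin n)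
  · by_cases hj : j = (⟨0, hn⟩ : Fin n)
    · have hp : ∀ k : Fin n, (if i = (⟨0, hn⟩ : Fin n) then (if k = (⟨0, hn⟩ : Fin n) then (n:ℤ) - 1 else 0) else (if k = (⟨0, hn⟩ : Fin n) then 1 else 0) - (if k = i then 1 else 0)) * (if j = (⟨0, hn⟩ : Fin n) then 1 else if k = j then -1 else 0)
          = if k = (⟨0, hn⟩ : Fin n) then (n:ℤ) - 1 else 0 := by
        intro k; by_cases h : k = (⟨0, hn⟩ : Fin n) <;> simp [h, hi, hj]
      rw [Finset.sum_congr rfl fun k _ => hp k, L1]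
      simp [hi, hj]
    · have hp : ∀ k : Fin n, (if i = (⟨0, hn⟩ : Fin n) then (if k = (⟨0, hn⟩ : Fin n) then (n:ℤ) - 1 else 0) else (if k = (⟨0, hn⟩ : Fin n) then 1 else 0) - (if k = i then 1 else 0)) * (if j = (⟨0, hn⟩ : Fin n) then 1 else if k = j then -1 else 0)
          = 0 := by
        intro k
        by_cases h : k = (⟨0, hn⟩ : Fin n) <;> by_cases h2 : k = j <;>
          simp_all [hi, hj] <;> simp_all [Ne.symm hj]
      rw [Finset.sum_congr rfl fun k _ => hp k]
      have : ¬ i = j := by rw [hi]; exact Ne.symm hj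
      simp [this]
  · by_cases hj : j = (⟨0, hn⟩ : Fin n)
    · have hp : ∀ k : Fin n, (if i = (⟨0, hn⟩ : Fin n) then (if k = (⟨0, hn⟩ : Fin n) then (n:ℤ) - 1 else 0) else (if k = (⟨0, hn⟩ : Fin n) then 1 else 0) - (if k = i then 1 else 0)) * (if j = (⟨0, hn⟩ : Fin n) then 1 else if k = j then -1 else 0)
          = (if k = (⟨0, hn⟩ : Fin n) then 1 else 0) - (if k = i then 1 else 0) := by
        intro k; simp [hi, hj]
      rw [Finset.sum_congr rfl fun k _ => hp k, Finset.sum_sub_distrib,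
        Finset.sum_ite_eq' univ (⟨0, hn⟩ : Fin n) (fun _ => (1:ℤ)),
        Finset.sum_ite_eq' univ i (fun _ => (1:ℤ))]
      have : ¬ i = j := by rw [hj]; exact hi
      simp [this]
    · have hp : ∀ k : Fin n, (if i = (⟨0, hn⟩ : Fin n) then (if k = (⟨0, hn⟩ : Fin n) then (n:ℤ) - 1 else 0) else (if k = (⟨0, hn⟩ : Fin n) then 1 else 0) - (if k = i then 1 else 0)) * (if j = (⟨0, hn⟩ : Fin n) then 1 else if k = j then -1 else 0)
          = if k = j then (if i = j then 1 else 0) else 0 := by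
        intro k
        by_cases h2 : k = j
        · have hkz : ¬ k = (⟨0, hn⟩ : Fin n) := fun h => hj (h2.symm.trans h)
          by_cases h4 : i = j
          · simp [hi, hj, h2, hkz, h4]
          · simp [hi, hj, h2, hkz, h4, Ne.symm h4]
        · simp [hi, hj, h2]
      rw [Finset.sum_congr rfl fun k _ => hp k,
        Finset.sum_ite_eq' univ j (fun _ => (if i = j then (1:ℤ) else 0))]
      by_cases h4 : i = j <;> simp [h4, hi, hj]

lemma uuInv : uM n * uInvM n = 1 := by
  ext i j
  have hn : 0 < n := i.pos
  rw [Matrix.mul_apply]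
  simp only [uM, uInvM, Matrix.of_apply, val_eq_zero_iff hn, Matrix.one_apply]
  by_cases hi : i = (⟨0, hn⟩ : Fin n)
  · by_cases hj : j = (⟨0, hn⟩ : Fin n)
    · have hp : ∀ k : Fin n, (if i = (⟨0, hn⟩ : Fin n) then (if k = (⟨0, hn⟩ : Fin n) then 2 - (n:ℤ) else 1) else if k = (⟨0, hn⟩ : Fin n) then -1 else if k = i then 1 else 0) * (if j = (⟨0, hn⟩ : Fin n) then 1 else if k = j then 0 else -1)
          = if k = (⟨0, hn⟩ : Fin n) then 2 - (n:ℤ) else 1 := by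
        intro k; by_cases h : k = (⟨0, hn⟩ : Fin n) <;> simp [h, hi, hj]
      rw [Finset.sum_congr rfl fun k _ => hp k, L1]
      have : i = j := hi.trans hj.symm
      simp [this] <;> ring
    · have hp : ∀ k : Fin n, (if i = (⟨0, hn⟩ : Fin n) then (if k = (⟨0, hn⟩ : Fin n) then 2 - (n:ℤ) else 1) else if k = (⟨0, hn⟩ : Fin n) then -1 else if k = i then 1 else 0) * (if j = (⟨0, hn⟩ : Fin n) then 1 else if k = j then 0 else -1)
          = if k = (⟨0, hn⟩ : Fin n) then (n:ℤ) - 2 else if k = j then 0 else -1 := by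
        intro k
        by_cases h : k = (⟨0, hn⟩ : Fin n)
        · simp [h, hi, hj, Ne.symm hj] <;> ring
        · by_cases h2 : k = j <;> simp [h, h2, hi, hj]
      rw [Finset.sum_congr rfl fun k _ => hp k, L2 (fun h => hj h.symm)]
      have : ¬ i = j := by rw [hi]; exact Ne.symm hj
      simp [this] <;> ring
  · by_cases hj : j = (⟨0, hn⟩ : Fin n)
    · have hp : ∀ k : Fin n, (if i = (⟨0, hn⟩ : Fin n) then (if k = (⟨0, hn⟩ : Fin n) then 2 - (n:ℤ) else 1) else if k = (⟨0, hn⟩ : Fin n) then -1 else if k = i then 1 else 0) * (if j = (⟨0, hn⟩ : Fin n) then 1 else if k = j then 0 else -1)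
          = if k = (⟨0, hn⟩ : Fin n) then -1 else if k = i then 1 else 0 := by
        intro k; by_cases h : k = (⟨0, hn⟩ : Fin n) <;> by_cases h2 : k = i <;> simp [h, h2, hi, hj]
      rw [Finset.sum_congr rfl fun k _ => hp k, L2 (Ne.symm hi)]
      have : ¬ i = j := by rw [hj]; exact hi
      simp [this]
    · have hp : ∀ k : Fin n, (if i = (⟨0, hn⟩ : Fin n) then (if k = (⟨0, hn⟩ : Fin n) then 2 - (n:ℤ) else 1) else if k = (⟨0, hn⟩ : Fin n) then -1 else if k = i then 1 else 0) * (if j = (⟨0, hn⟩ : Fin n) then 1 else if k = j then 0 else -1)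
          = if k = (⟨0, hn⟩ : Fin n) then 1 else if k = i then (if i = j then 0 else -1) else 0 := by
        intro k
        by_cases h : k = (⟨0, hn⟩ : Fin n)
        · simp [h, hi, hj, Ne.symm hj]
        · by_cases h2 : k = i
          · subst h2; by_cases h3 : k = j <;> simp [h, h3, hi, hj]
          · simp [h, h2, hi, hj]
      rw [Finset.sum_congr rfl fun k _ => hp k, L2 (Ne.symm hi)]
      by_cases h4 : i = j <;> simp [h4, hi, hj, Ne.symm hj] <;> ring

lemma vv : vM n * vM n = 1 := by
  ext i j
  have hn : 0 < n := i.pos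
  rw [Matrix.mul_apply]
  simp only [vM, Matrix.of_apply, val_eq_zero_iff hn, Matrix.one_apply]
  by_cases hi : i = (⟨0, hn⟩ : Fin n)
  · have hp : ∀ k : Fin n, (if k = (⟨0, hn⟩ : Fin n) then 1 else if i = k then -1 else 0) * (if j = (⟨0, hn⟩ : Fin n) then 1 else if k = j then -1 else 0)
        = if k = (⟨0, hn⟩ : Fin n) then (if j = (⟨0, hn⟩ : Fin n) then 1 else 0) else 0 := by
      intro k
      by_cases h : k = (⟨0, hn⟩ : Fin n)
      · have hzk : ¬ j = (⟨0, hn⟩ : Fin n) → ¬ k = j := fun hj hkj => hj (hkj.symm.trans h)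
        by_cases hj : j = (⟨0, hn⟩ : Fin n)
        · simp [h, hj]
        · simp [h, hj, hzk hj, Ne.symm hj]
      · have hik : ¬ i = k := fun h2 => h (h2.symm.trans hi)
        simp [h, hik]
    rw [Finset.sum_congr rfl fun k _ => hp k,
      Finset.sum_ite_eq' univ (⟨0, hn⟩ : Fin n)]
    by_cases hj : j = (⟨0, hn⟩ : Fin n)
    · simp [hi, hj, hi.trans hj.symm]
    · have : ¬ i = j := fun h => hj (h.symm.trans hi)
      simp [hj, this]
  · have hp : ∀ k : Fin n, (if k = (⟨0, hn⟩ : Fin n) then 1 else if i = k then -1 else 0) * (if j = (⟨0, hn⟩ : Fin n) then 1 else if k = j then -1 else 0)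
        = if k = (⟨0, hn⟩ : Fin n) then (if j = (⟨0, hn⟩ : Fin n) then 1 else 0)
          else if k = i then -(if j = (⟨0, hn⟩ : Fin n) then 1 else if i = j then -1 else 0) else 0 := by
      intro k
      by_cases h : k = (⟨0, hn⟩ : Fin n)
      · have hzk : ¬ j = (⟨0, hn⟩ : Fin n) → ¬ k = j := fun hj hkj => hj (hkj.symm.trans h)
        by_cases hj : j = (⟨0, hn⟩ : Fin n)
        · simp [h, hj]
        · simp [h, hj, hzk hj, Ne.symm hj]
      · by_cases h2 : k = i
        · simp [h2, hi, apply_ite Neg.neg]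
        · simp [h, h2, Ne.symm h2]
    rw [Finset.sum_congr rfl fun k _ => hp k, L2 (Ne.symm hi)]
    by_cases hj : j = (⟨0, hn⟩ : Fin n)
    · simp [hj, hi] <;> ring
    · by_cases h4 : i = j <;> simp [hj, h4, Ne.symm hj] <;> ring

lemma uInvu : uInvM n * uM n = 1 := mul_eq_one_comm.mp (uuInv)

variable (n)

def tpow (a : Matrix (Fin n) (Fin n) ℤ) :
    Matrix (Fin n → Fin n) (Fin n → Fin n) ℤ :=
  Matrix.of fun f g => ∏ i, a (f i) (g i)

variable {n}

lemma tpow_mul (a b : Matrix (Fin n) (Fin n) ℤ) :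
    tpow n (a * b) = tpow n a * tpow n b := by
  ext f g
  rw [Matrix.mul_apply]
  simp only [tpow, Matrix.of_apply, Matrix.mul_apply]
  rw [Fintype.prod_sum fun i k => a (f i) k * b k (g i)]
  exact Finset.sum_congr rfl fun h _ => Finset.prod_mul_distrib

lemma tpow_one : tpow n (1 : Matrix (Fin n) (Fin n) ℤ) = 1 := by
  ext f g
  simp only [tpow, Matrix.of_apply, Matrix.one_apply]
  rw [Finset.prod_boole]
  simp [funext_iff]

lemma tpow_diagonal (w : Fin n → ℤ) :
    tpow n (Matrix.diagonal w) = Matrix.diagonal (fun f : Fin n → Fin n => ∏ i, w (f i)) := by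
  ext f g
  by_cases h : f = g
  · subst h
    simp [tpow, Matrix.diagonal_apply_eq]
  · obtain ⟨i, hi⟩ := Function.ne_iff.mp h
    rw [Matrix.diagonal_apply_ne _ h]
    exact Finset.prod_eq_zero (Finset.mem_univ i) (Matrix.diagonal_apply_ne w hi)

lemma A_eq_tpow : disjointTransversalMatrix n = tpow n (bM n) := by
  ext f g
  simp only [disjointTransversalMatrix, tpow, bM, Matrix.of_apply]
  rw [Finset.prod_boole]
  simp

variable (n)

def Dvec : (Fin n → Fin n) → ℤ := fun f => ∏ i, dv n (f i)

lemma big_snf :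
    tpow n (uM n) * disjointTransversalMatrix n * tpow n (vM n)
      = Matrix.diagonal (Dvec n) := by
  rw [A_eq_tpow, ← tpow_mul, ← tpow_mul, ubv, tpow_diagonal]
  rfl

lemma PPinv : tpow n (uM n) * tpow n (uInvM n) = 1 := by
  rw [← tpow_mul, uuInv, tpow_one]

lemma PinvP : tpow n (uInvM n) * tpow n (uM n) = 1 :=
  mul_eq_one_comm.mp (PPinv n)

lemma QQ : tpow n (vM n) * tpow n (vM n) = 1 := by
  rw [← tpow_mul, vv, tpow_one]

/-- number of coordinates hitting the special column `0`. -/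
def kcount (f : Fin n → Fin n) : ℕ := (univ.filter fun i => (f i : ℕ) = 0).card

lemma kcount_le (f : Fin n → Fin n) : kcount n f ≤ n :=
  (Finset.card_filter_le _ _).trans (by simp)

def kfin (f : Fin n → Fin n) : Fin (n + 1) := ⟨kcount n f, Nat.lt_succ_of_le (kcount_le n f)⟩

variable {n}

lemma Dvec_eq (hn : 0 < n) (f : Fin n → Fin n) :
    Dvec n f = (((n - 1) ^ kcount n f : ℕ) : ℤ) := by
  have : Dvec n f = ((n : ℤ) - 1) ^ kcount n f := by
    rw [Dvec, kcount, ← Finset.prod_const, Finset.prod_filter]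
    rfl
  rw [this]
  push_cast [Nat.cast_sub hn]
  ring

lemma range_diagonal {ι : Type*} [Fintype ι] [DecidableEq ι] (w : ι → ℤ) :
    LinearMap.range (Matrix.diagonal w).mulVecLin
      = Submodule.pi Set.univ (fun i => Ideal.span {w i}) := by
  ext x
  simp only [LinearMap.mem_range, Submodule.mem_pi, Set.mem_univ, forall_true_left,
    Ideal.mem_span_singleton]
  constructor
  · rintro ⟨v, rfl⟩ i
    exact ⟨v i, by simp [Matrix.mulVecLin, Matrix.mulVec_diagonal]⟩
  · intro h
    choose c hc using h
    refine ⟨c, funext fun i => ?_⟩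
    simp [Matrix.mulVecLin, Matrix.mulVec_diagonal, (hc i).symm]

/-- reindexing a dependent product along an equiv, as an `AddEquiv`. -/
def piCongr {ι κ : Type*} (M : κ → Type*) [∀ k, AddCommMonoid (M k)] (e : ι ≃ κ) :
    (∀ k, M k) ≃+ ∀ i, M (e i) :=
  { Equiv.piCongrLeft' M e.symm with map_add' := fun _ _ => rfl }

/-- currying a product over a sigma type, as an `AddEquiv`. -/
def addPiCurry {α : Type*} {β : α → Type*} (γ : ∀ a, β a → Type*)
    [∀ a b, AddCommMonoid (γ a b)] :
    (∀ x : Σ a, β a, γ x.1 x.2) ≃+ ∀ a, ∀ b, γ a b :=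
  { Equiv.piCurry γ with map_add' := fun _ _ => rfl }

def zmodCongr {a b : ℕ} (h : a = b) : ZMod a ≃+ ZMod b := by
  subst h; exact AddEquiv.refl _

lemma filter_dite (hn : 0 < n) (s : Finset (Fin n))
    (g : {i : Fin n // i ∉ s} → {j : Fin n // ¬ (j : ℕ) = 0}) :
    (univ.filter fun i =>
      Fin.val (if h : i ∈ s then (⟨0, hn⟩ : Fin n) else (g ⟨i, h⟩).1) = 0) = s := by
  ext i
  simp only [Finset.mem_filter, Finset.mem_univ, true_and]
  by_cases h : i ∈ s
  · simp [h]
  · simp [h, (g ⟨i, h⟩).2]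

lemma kcount_dite (hn : 0 < n) (s : Finset (Fin n))
    (g : {i : Fin n // i ∉ s} → {j : Fin n // ¬ (j : ℕ) = 0}) :
    kcount n (fun i => if h : i ∈ s then (⟨0, hn⟩ : Fin n) else (g ⟨i, h⟩).1) = s.card := by
  have h := congrArg Finset.card (filter_dite hn s g)
  exact h

lemma card_fiber (hn : 0 < n) (k : Fin (n + 1)) :
    Fintype.card {f : Fin n → Fin n // kfin n f = k}
      = n.choose k * (n - 1) ^ (n - (k : ℕ)) := by
  classical
  let F : (Σ s : {s : Finset (Fin n) // s.card = (k : ℕ)},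
      ({i : Fin n // i ∉ s.1} → {j : Fin n // ¬ (j : ℕ) = 0}))
      → {f : Fin n → Fin n // kfin n f = k} := fun p =>
    ⟨fun i => if h : i ∈ p.1.1 then ⟨0, hn⟩ else (p.2 ⟨i, h⟩).1,
      Fin.ext ((kcount_dite hn p.1.1 p.2).trans p.1.2)⟩
  have hbij : Function.Bijective F := by
    constructor
    · rintro ⟨⟨s, hs⟩, g⟩ ⟨⟨t, ht⟩, g'⟩ hpq
      have hfun : (fun i => if h : i ∈ s then (⟨0, hn⟩ : Fin n) else (g ⟨i, h⟩).1)
          = (fun i => if h : i ∈ t then (⟨0, hn⟩ : Fin n) else (g' ⟨i, h⟩).1) :=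
        congrArg Subtype.val hpq
      have hst : s = t := by
        ext i
        have h2 := congrFun hfun i
        constructor
        · intro hi
          by_contra hit
          rw [dif_pos hi, dif_neg hit] at h2
          exact (g' ⟨i, hit⟩).2 (congrArg Fin.val h2).symm
        · intro hi
          by_contra hit
          rw [dif_neg hit, dif_pos hi] at h2
          exact (g ⟨i, hit⟩).2 (congrArg Fin.val h2)
      subst hst
      have hg : g = g' := by
        funext i
        apply Subtype.ext
        have := congrFun hfun i.1
        rwa [dif_neg i.2, dif_neg i.2] at this
      subst hg
      rfl
    · rintro ⟨f, hf⟩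
      refine ⟨⟨⟨univ.filter fun i => (f i : ℕ) = 0, congrArg Fin.val hf⟩,
        fun i => ⟨f i.1, by simpa using i.2⟩⟩, ?_⟩
      apply Subtype.ext
      funext i
      show (if h : i ∈ univ.filter fun i => (f i : ℕ) = 0 then (⟨0, hn⟩ : Fin n)
        else f i) = f i
      by_cases h : i ∈ univ.filter fun i => (f i : ℕ) = 0
      · rw [dif_pos h]
        exact (Fin.ext (by simpa using h)).symm
      · rw [dif_neg h]
  rw [← Fintype.card_of_bijective hbij, Fintype.card_sigma]
  have h1 : Fintype.card {j : Fin n // (j : ℕ) = 0} = 1 :=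
    Fintype.card_eq_one_iff.mpr ⟨⟨(⟨0, hn⟩ : Fin n), rfl⟩,
      fun y => Subtype.ext (Fin.ext y.2)⟩
  have hNZ : Fintype.card {j : Fin n // ¬ (j : ℕ) = 0} = n - 1 := by
    rw [Fintype.card_subtype_compl, h1, Fintype.card_fin]
  have hterm : ∀ s : {s : Finset (Fin n) // s.card = (k : ℕ)},
      Fintype.card ({i : Fin n // i ∉ s.1} → {j : Fin n // ¬ (j : ℕ) = 0})
        = (n - 1) ^ (n - (k : ℕ)) := by
    intro s
    rw [Fintype.card_fun, hNZ]
    congr 1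
    rw [Fintype.card_subtype_compl, Fintype.card_fin]
    congr 1
    exact (Fintype.card_coe s.1).trans s.2
  rw [Finset.sum_congr rfl fun s _ => hterm s, Finset.sum_const, Finset.card_univ,
    Fintype.card_finset_len, Fintype.card_fin, smul_eq_mul]

noncomputable def reindex (hn : 0 < n) :
    (∀ f : Fin n → Fin n, ZMod ((n - 1) ^ kcount n f)) ≃+
      ∀ k : Fin (n + 1), Fin (n.choose k * (n - 1) ^ (n - (k : ℕ))) → ZMod ((n - 1) ^ (k : ℕ)) :=
  (piCongr (fun f : Fin n → Fin n => ZMod ((n - 1) ^ kcount n f))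
      (Equiv.sigmaFiberEquiv (kfin n))).trans <|
  (addPiCurry fun (k : Fin (n + 1)) (x : {f : Fin n → Fin n // kfin n f = k}) =>
      ZMod ((n - 1) ^ kcount n x.1)).trans <|
  AddEquiv.piCongrRight fun k =>
    (AddEquiv.piCongrRight fun x =>
        zmodCongr (congrArg (fun m => (n - 1) ^ m) (congrArg Fin.val x.2))).trans
      (piCongr (fun _ => ZMod ((n - 1) ^ (k : ℕ)))
        ((Fintype.equivFinOfCardEq (card_fiber hn k)).symm))

end DTA

/-- The cokernel of `A_n` acting on `ℤ^(Fin n → Fin n)` is isomorphic, as an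
abelian group, to the direct sum over `0 ≤ k ≤ n` of
`(n choose k) * (n-1)^(n-k)` copies of `ℤ/((n-1)^k)ℤ`. -/
theorem cokernel_disjointTransversalMatrix (n : ℕ) (hn : 0 < n) :
    Nonempty
      ((((Fin n → Fin n) → ℤ) ⧸
          LinearMap.range (disjointTransversalMatrix n).mulVecLin) ≃+
        ((k : Fin (n + 1)) →
          Fin (n.choose k * (n - 1) ^ (n - (k : ℕ))) → ZMod ((n - 1) ^ (k : ℕ)))) := by
  classical
  let eP : ((Fin n → Fin n) → ℤ) ≃ₗ[ℤ] ((Fin n → Fin n) → ℤ) :=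
    LinearEquiv.ofLinear (DTA.tpow n (DTA.uM n)).mulVecLin (DTA.tpow n (DTA.uInvM n)).mulVecLin
      (by rw [← Matrix.mulVecLin_mul, DTA.PPinv, Matrix.mulVecLin_one])
      (by rw [← Matrix.mulVecLin_mul, DTA.PinvP, Matrix.mulVecLin_one])
  have hQsurj : Function.Surjective (DTA.tpow n (DTA.vM n)).mulVecLin := by
    intro x
    refine ⟨(DTA.tpow n (DTA.vM n)).mulVecLin x, ?_⟩
    have h := congrArg Matrix.mulVecLin (DTA.QQ n)
    rw [Matrix.mulVecLin_mul, Matrix.mulVecLin_one] at h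
    simpa using DFunLike.congr_fun h x
  have hrange : Submodule.map (eP : ((Fin n → Fin n) → ℤ) →ₗ[ℤ] ((Fin n → Fin n) → ℤ))
      (LinearMap.range (disjointTransversalMatrix n).mulVecLin)
      = LinearMap.range (Matrix.diagonal (DTA.Dvec n)).mulVecLin := by
    have hD : (Matrix.diagonal (DTA.Dvec n)).mulVecLin
        = (DTA.tpow n (DTA.uM n)).mulVecLin ∘ₗ
          ((disjointTransversalMatrix n).mulVecLin ∘ₗ (DTA.tpow n (DTA.vM n)).mulVecLin) := by
      rw [← DTA.big_snf n, mul_assoc, Matrix.mulVecLin_mul, Matrix.mulVecLin_mul]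
    rw [hD, LinearMap.range_comp,
      LinearMap.range_comp_of_range_eq_top _ (LinearMap.range_eq_top.mpr hQsurj)]
    rfl
  let e1 := Submodule.Quotient.equiv _ _ eP hrange
  let e2 := Submodule.quotEquivOfEq _ _ (DTA.range_diagonal (DTA.Dvec n))
  let e3 := Submodule.quotientPi (fun f : Fin n → Fin n => Ideal.span {DTA.Dvec n f})
  let e4 : (∀ f : Fin n → Fin n, ℤ ⧸ Ideal.span {DTA.Dvec n f}) ≃+
      (∀ f : Fin n → Fin n, ZMod ((n - 1) ^ DTA.kcount n f)) :=
    AddEquiv.piCongrRight fun f =>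
      ((Ideal.quotEquivOfEq (by rw [DTA.Dvec_eq hn f])).trans
        (Int.quotientSpanNatEquivZMod ((n - 1) ^ DTA.kcount n f))).toAddEquiv
  exact ⟨((e1.trans (e2.trans e3)).toAddEquiv).trans (e4.trans (DTA.reindex hn))⟩
end

section
/- There exist unimodular integer n × n matrices P and Q (determinant a unit in ℤ) such that P · B_n · Q is the diagonal matrix whose first n - 1 diagonal entries are 1 and whose last diagonal entry is n - 1. That is, the Smith normal form of B_n = J_n - I_n is diag(1, 1, …, 1, n-1): its invariant factors are 1 with multiplicity n - 1 and n - 1 with multiplicity 1. -/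
/-- The `n × n` integer matrix `B_n = J_n - I_n`, with zero diagonal and all
off-diagonal entries equal to one. -/
def offDiagOnesMatrix (n : ℕ) : Matrix (Fin n) (Fin n) ℤ :=
  Matrix.of fun i j => if i = j then 0 else 1

/-- The Smith normal form of `B_n = J_n - I_n` is `diag(1, 1, …, 1, n-1)`:
there exist unimodular integer matrices `P`, `Q` with `P * B_n * Q` the diagonal
matrix whose first `n - 1` diagonal entries are `1` and whose last entry is `n - 1`. -/
theorem smithNormalForm_offDiagOnesMatrix (n : ℕ) (hn : 0 < n) :
    ∃ P Q : Matrix (Fin n) (Fin n) ℤ,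
      IsUnit P.det ∧ IsUnit Q.det ∧
      P * offDiagOnesMatrix n * Q =
        Matrix.diagonal (fun i : Fin n =>
          if (i : ℕ) < n - 1 then 1 else (n : ℤ) - 1) := by
  have hℓn : n - 1 < n := by omega
  set ℓ : Fin n := ⟨n - 1, hℓn⟩ with hℓdef
  set q : Fin n → Fin n → ℤ := fun i j => if j = ℓ then 1 else if i = j then -1 else 0 with hq
  set p : Fin n → Fin n → ℤ := fun i j =>
    if i = ℓ then (if j = ℓ then 2 - (n : ℤ) else 1)
    else (if j = ℓ then -1 else if i = j then 1 else 0) with hp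
  set r : Fin n → Fin n → ℤ := fun i k => if k = ℓ then 1 else if i = k then 0 else -1 with hr
  set P : Matrix (Fin n) (Fin n) ℤ := Matrix.of p with hP
  set Q : Matrix (Fin n) (Fin n) ℤ := Matrix.of q with hQ
  set R : Matrix (Fin n) (Fin n) ℤ := Matrix.of r with hR
  -- row sums
  have hrowp : ∀ i, (∑ j, p i j) = if i = ℓ then 1 else 0 := by
    intro i
    by_cases hi : i = ℓ
    · subst hi
      simp only [hp, if_pos rfl]
      have : ∀ j : Fin n, (if j = ℓ then 2 - (n : ℤ) else 1)
          = 1 + (if j = ℓ then 1 - (n : ℤ) else 0) := by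
        intro j; split_ifs <;> ring
      rw [Finset.sum_congr rfl fun j _ => this j, Finset.sum_add_distrib]
      simp [Finset.sum_ite_eq', Finset.card_univ]
    · simp only [hp, if_neg hi]
      have : ∀ j : Fin n, (if j = ℓ then (-1 : ℤ) else if i = j then 1 else 0)
          = (if j = ℓ then (-1 : ℤ) else 0) + (if j = i then 1 else 0) := by
        intro j
        rcases eq_or_ne j ℓ with h | h
        · subst h; simp [Ne.symm hi, eq_comm (a := i)]
        · simp [h, eq_comm (a := i)]
      rw [Finset.sum_congr rfl fun j _ => this j, Finset.sum_add_distrib]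
      simp [Finset.sum_ite_eq', hi]
  have hrowq : ∀ i, (∑ j, q i j) = if i = ℓ then 1 else 0 := by
    intro i
    by_cases hi : i = ℓ
    · subst hi
      have : ∀ j : Fin n, q ℓ j = if j = ℓ then 1 else 0 := by
        intro j; simp only [hq]
        rcases eq_or_ne j ℓ with h | h
        · simp [h]
        · simp [h, Ne.symm h]
      rw [Finset.sum_congr rfl fun j _ => this j]
      simp [Finset.sum_ite_eq']
    · have : ∀ j : Fin n, q i j = (if j = ℓ then (1:ℤ) else 0) + (if j = i then -1 else 0) := by
        intro j; simp only [hq]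
        rcases eq_or_ne j ℓ with h | h
        · subst h
          simp [Ne.symm hi]
        · simp [h, eq_comm (a := i)]
      rw [Finset.sum_congr rfl fun j _ => this j, Finset.sum_add_distrib]
      simp [Finset.sum_ite_eq', hi]
  -- Q * Q = 1
  have hQQ : Q * Q = 1 := by
    ext i k
    rw [Matrix.mul_apply]
    by_cases hk : k = ℓ
    · subst hk
      have : ∀ j : Fin n, Q i j * Q j ℓ = q i j := by
        intro j
        simp [hQ, hq]
      rw [Finset.sum_congr rfl fun j _ => this j, hrowq]
      simp [Matrix.one_apply]
    · have : ∀ j : Fin n, Q i j * Q j k = if j = k then -(q i j) else 0 := by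
        intro j
        simp only [hQ, Matrix.of_apply, hq]
        rcases eq_or_ne j k with h | h
        · subst h; simp [hk]; try ring
        · simp [h, hk]
      rw [Finset.sum_congr rfl fun j _ => this j]
      simp only [Finset.sum_ite_eq', Finset.mem_univ, if_pos]
      simp only [hq, if_neg hk, Matrix.one_apply]
      rcases eq_or_ne i k with h | h <;> simp [h]
  -- P * R = 1
  have hPR : P * R = 1 := by
    ext i k
    rw [Matrix.mul_apply]
    by_cases hk : k = ℓ
    · subst hk
      have : ∀ j : Fin n, P i j * R j ℓ = p i j := by
        intro j
        simp [hP, hR, hr]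
      rw [Finset.sum_congr rfl fun j _ => this j, hrowp]
      simp [Matrix.one_apply]
    · have : ∀ j : Fin n, P i j * R j k = -(p i j) + (if j = k then p i j else 0) := by
        intro j
        simp only [hP, hR, Matrix.of_apply, hr, if_neg hk]
        rcases eq_or_ne j k with h | h
        · subst h; simp
        · simp [h]
      rw [Finset.sum_congr rfl fun j _ => this j, Finset.sum_add_distrib,
        Finset.sum_neg_distrib, hrowp]
      simp only [Finset.sum_ite_eq', Finset.mem_univ, if_pos, Matrix.one_apply]
      by_cases hi : i = ℓ
      · subst hi
        simp only [if_pos rfl, hp, if_pos rfl, if_neg hk]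
        simp [Ne.symm hk]
      · simp only [if_neg hi, hp, if_neg hi, if_neg hk]
        rcases eq_or_ne i k with h | h <;> simp [h]
  -- P * B
  have hPB : ∀ i k, (P * offDiagOnesMatrix n) i k
      = if i = ℓ then (if k = ℓ then (n : ℤ) - 1 else 0) else q i k := by
    intro i k
    rw [Matrix.mul_apply]
    have : ∀ j : Fin n, P i j * offDiagOnesMatrix n j k
        = p i j - (if j = k then p i j else 0) := by
      intro j
      simp only [hP, Matrix.of_apply, offDiagOnesMatrix, Matrix.of_apply]
      rcases eq_or_ne j k with h | h <;> simp [h]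
    rw [Finset.sum_congr rfl fun j _ => this j, Finset.sum_sub_distrib, hrowp]
    simp only [Finset.sum_ite_eq', Finset.mem_univ, if_pos]
    by_cases hi : i = ℓ
    · subst hi
      simp only [if_pos rfl, hp, if_pos rfl]
      rcases eq_or_ne k ℓ with h | h <;> simp [h] <;> ring
    · simp only [if_neg hi, hp, if_neg hi, hq]
      rcases eq_or_ne k ℓ with h | h
      · simp [h]
      · rcases eq_or_ne i k with h2 | h2 <;> simp [h, h2]
  refine ⟨P, Q, Matrix.isUnit_det_of_right_inverse hPR,
    Matrix.isUnit_det_of_right_inverse (by rw [hQQ] : Q * Q = 1), ?_⟩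
  have hval : (ℓ : ℕ) = n - 1 := rfl
  ext i k
  rw [Matrix.mul_apply]
  by_cases hi : i = ℓ
  · subst hi
    have : ∀ j : Fin n, (P * offDiagOnesMatrix n) ℓ j * Q j k
        = if j = ℓ then ((n : ℤ) - 1) * q j k else 0 := by
      intro j
      rw [hPB]
      rcases eq_or_ne j ℓ with h | h <;> simp [h, hQ]
    rw [Finset.sum_congr rfl fun j _ => this j]
    simp only [Finset.sum_ite_eq', Finset.mem_univ, if_pos]
    have hqlk : q ℓ k = if ℓ = k then 1 else 0 := by
      simp only [hq]
      rcases eq_or_ne k ℓ with h | h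
      · simp [h]
      · simp [h, Ne.symm h]
    rw [hqlk]
    have hlt : ¬ ((ℓ : ℕ) < n - 1) := by simp [hℓdef]
    rcases eq_or_ne ℓ k with h | h
    · simp [Matrix.diagonal, ← h, hlt]
    · simp [Matrix.diagonal, h, hlt]
  · have hsum : (∑ j, (P * offDiagOnesMatrix n) i j * Q j k) = (Q * Q) i k := by
      rw [Matrix.mul_apply]
      refine Finset.sum_congr rfl fun j _ => ?_
      rw [hPB, if_neg hi]
      rfl
    rw [hsum, hQQ]
    have hlt : (i : ℕ) < n - 1 := by
      have h1 := i.isLt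
      have h2 : (i : ℕ) ≠ n - 1 := fun h => hi (Fin.ext h)
      omega
    simp [Matrix.one_apply, Matrix.diagonal, hlt]
end

section
/- There exist ℤ-bases x_1, …, x_n and y_1, …, y_n of the free abelian group ℤ^n such that the ℤ-linear endomorphism θ of ℤ^n given by multiplication by B_n = J_n - I_n satisfies θ(x_1) = (n-1)·y_1 and θ(x_i) = y_i for all 2 ≤ i ≤ n. -/
/-- Linear equiv sending `e 0 ↦ all-ones`, `e i ↦ e i` for `i ≠ 0`. -/
def fx (m : ℕ) : (Fin (m+1) → ℤ) ≃ₗ[ℤ] (Fin (m+1) → ℤ) where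
  toFun v j := v 0 + if j = 0 then 0 else v j
  invFun w j := if j = 0 then w 0 else w j - w 0
  map_add' v w := by funext j; by_cases h : j = 0 <;> simp [h] <;> ring
  map_smul' c v := by funext j; by_cases h : j = 0 <;> simp [h] <;> ring
  left_inv v := by funext j; by_cases h : j = 0 <;> simp [h]
  right_inv w := by funext j; by_cases h : j = 0 <;> simp [h]

/-- Involution sending `e 0 ↦ e 0` and `e i ↦ e 0 - e i` for `i ≠ 0`. -/
def fs (m : ℕ) : (Fin (m+1) → ℤ) ≃ₗ[ℤ] (Fin (m+1) → ℤ) where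
  toFun v j := if j = 0 then ∑ i, v i else -v j
  invFun v j := if j = 0 then ∑ i, v i else -v j
  map_add' v w := by
    funext j; by_cases h : j = 0 <;> simp [h, Finset.sum_add_distrib] <;> ring
  map_smul' c v := by
    funext j; by_cases h : j = 0 <;> simp [h, Finset.mul_sum]
  left_inv v := by
    funext j; by_cases h : j = 0 <;>
      simp [h, Fin.sum_univ_succ, Fin.succ_ne_zero]
  right_inv v := by
    funext j; by_cases h : j = 0 <;>
      simp [h, Fin.sum_univ_succ, Fin.succ_ne_zero]

/-- There are ℤ-bases `x` and `y` of `ℤ^n` such that the endomorphism `θ` given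
by multiplication by `B_n = J_n - I_n` satisfies `θ(x 0) = (n-1) • y 0` and
`θ(x i) = y i` for all `i ≠ 0`. -/
theorem exists_bases_offDiagOnesMatrix (n : ℕ) (hn : 0 < n) :
    ∃ x y : Module.Basis (Fin n) ℤ (Fin n → ℤ),
      (offDiagOnesMatrix n).mulVecLin (x ⟨0, hn⟩) = ((n : ℤ) - 1) • y ⟨0, hn⟩ ∧
      ∀ i : Fin n, i ≠ ⟨0, hn⟩ → (offDiagOnesMatrix n).mulVecLin (x i) = y i := by
  obtain ⟨m, rfl⟩ : ∃ m, n = m + 1 := ⟨n - 1, (Nat.succ_pred_eq_of_pos hn).symm⟩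
  have key : ∀ j : Fin (m+1), (∑ k, if j = k then (0:ℤ) else 1) = m := by
    intro j
    rw [Finset.sum_ite]
    simp [Finset.filter_eq, Finset.filter_ne]
  -- the x basis vectors
  have hx0 : (fx m) (Pi.single (0 : Fin (m+1)) (1:ℤ)) = fun _ => 1 := by
    funext j
    simp only [fx, fs, LinearEquiv.coe_mk, LinearMap.coe_mk, AddHom.coe_mk, Equiv.coe_fn_mk, Pi.single_apply]
    split_ifs <;> simp_all
  have hxi : ∀ i : Fin (m+1), i ≠ 0 →
      (fx m) (Pi.single i (1:ℤ)) = Pi.single i 1 := by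
    intro i hi
    funext j
    simp only [fx, fs, LinearEquiv.coe_mk, LinearMap.coe_mk, AddHom.coe_mk, Equiv.coe_fn_mk, Pi.single_apply]
    split_ifs <;> simp_all
  -- the y basis vectors
  have hy0 : (fx m) ((fs m) (Pi.single (0 : Fin (m+1)) (1:ℤ))) = fun _ => 1 := by
    have : (fs m) (Pi.single (0 : Fin (m+1)) (1:ℤ)) = Pi.single 0 1 := by
      funext j
      simp only [fs, LinearEquiv.coe_mk, LinearMap.coe_mk, AddHom.coe_mk, Equiv.coe_fn_mk, Pi.single_apply]
      split_ifs <;> simp_all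
    rw [this, hx0]
  have hyi : ∀ i : Fin (m+1), i ≠ 0 →
      (fx m) ((fs m) (Pi.single i (1:ℤ))) = fun j => if j = i then 0 else 1 := by
    intro i hi
    funext j
    simp only [fx, fs, LinearEquiv.coe_mk, LinearMap.coe_mk, AddHom.coe_mk, Equiv.coe_fn_mk, Pi.single_apply]
    split_ifs <;> simp_all
  have h0 : (⟨0, hn⟩ : Fin (m+1)) = 0 := rfl
  refine ⟨(Pi.basisFun ℤ (Fin (m+1))).map (fx m),
          (Pi.basisFun ℤ (Fin (m+1))).map ((fs m).trans (fx m)), ?_, ?_⟩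
  · funext j
    simp only [Module.Basis.map_apply, Pi.basisFun_apply, LinearEquiv.trans_apply,
      Matrix.mulVecLin_apply, Matrix.mulVec, dotProduct, offDiagOnesMatrix,
      Matrix.of_apply, Pi.smul_apply, smul_eq_mul, h0, hx0, hy0, mul_one]
    rw [key j]
    push_cast
    ring
  · intro i hi
    have hi' : i ≠ 0 := hi
    funext j
    simp only [Module.Basis.map_apply, Pi.basisFun_apply, LinearEquiv.trans_apply,
      Matrix.mulVecLin_apply, Matrix.mulVec, dotProduct, offDiagOnesMatrix,
      Matrix.of_apply, hxi i hi', hyi i hi', Pi.single_apply, mul_ite, mul_one, mul_zero]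
    simp [Finset.sum_ite_eq]
end
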